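/- arXiv:2509.14229 — 6 statements merged into one kernel-verified Lean document; each statement's English description precedes it below -/
import Mathlib

section
/- Let X₁ be the submatrix of the inverse of the augmented difference matrix D̃ consisting of its first n-1 columns, and P₂ = (1/n)𝟙𝟙^⊤. Then for every y ∈ ℝ^n and every k ∈ {1,…,n-1}, the k-th coordinate of X₁^⊤(I-P₂)y equals -∑_{i=1}^k (yᵢ - ȳ), i.e., the negative cumulative sum of the demeaned data up to index k. -/
/-!
For `k < n - 1` the `k`-th column of `D̃⁻¹` is the demeaned indicator of `{i | k < i}`: its first
differences are those of the indicator, i.e. `e_k`, and the row of ones sees a vector of sum zero.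
Since `(I - P₂) y` is the demeaned `y`, the constant shift of that column is invisible in the inner
product, which leaves the tail sum of `y - ȳ` past `k`, i.e. minus its head sum.
-/

open Matrix Finset

section Demean

variable {ι K : Type*} [Fintype ι] [Field K]

noncomputable def demean (v : ι → K) : ι → K :=
  fun i => v i - (Fintype.card ι : K)⁻¹ * ∑ j, v j

lemma demean_apply (v : ι → K) (i : ι) :
    demean v i = v i - (Fintype.card ι : K)⁻¹ * ∑ j, v j := rfl

lemma sum_demean [CharZero K] (v : ι → K) : ∑ i, demean v i = 0 := by
  cases isEmpty_or_nonempty ι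
  · simp
  · simp [demean_apply, Finset.sum_sub_distrib, Finset.card_univ]

lemma demean_sub_demean (v : ι → K) (i j : ι) : demean v i - demean v j = v i - v j := by
  simp only [demean_apply]
  ring

lemma demean_dotProduct_of_sum_eq_zero (u : ι → K) {v : ι → K} (hv : ∑ i, v i = 0) :
    demean u ⬝ᵥ v = u ⬝ᵥ v := by
  simp [dotProduct, demean_apply, sub_mul, Finset.sum_sub_distrib, ← Finset.mul_sum, hv]

lemma one_sub_mulVec_eq_demean [DecidableEq ι] {P : Matrix ι ι K}
    (hP : ∀ i j, P i j = (Fintype.card ι : K)⁻¹) (v : ι → K) : (1 - P) *ᵥ v = demean v := by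
  ext i
  rw [sub_mulVec, one_mulVec]
  simp [mulVec, dotProduct, hP, demean_apply, Finset.mul_sum]

end Demean

lemma Matrix.inv_apply_eq_of_mulVec_eq_single {ι R : Type*} [Fintype ι] [DecidableEq ι]
    [CommRing R] {A : Matrix ι ι R} (hA : IsUnit A) {c : ι → R} {k : ι}
    (h : A *ᵥ c = Pi.single k 1) (i : ι) : A⁻¹ i k = c i := by
  let := hA.invertible
  have hc := inv_mulVec_eq_vec h.symm
  rw [mulVec_single_one] at hc
  exact congrFun hc i

section DifferenceMatrix

variable {n : ℕ} {R : Type*} [Ring R] {D : Matrix (Fin n) (Fin n) R}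

lemma mulVec_apply_of_row_eq_diff {i : Fin n} (hi : (i : ℕ) + 1 < n)
    (hrow : ∀ j : Fin n, D i j =
      if (j : ℕ) = (i : ℕ) then -1 else if (j : ℕ) = (i : ℕ) + 1 then 1 else 0)
    (c : Fin n → R) : (D *ᵥ c) i = c ⟨i + 1, hi⟩ - c i := by
  have hDi : D i = Pi.single ⟨i + 1, hi⟩ 1 - Pi.single i 1 := by
    ext j
    rw [hrow, Pi.sub_apply, Pi.single_apply, Pi.single_apply]
    simp only [Fin.ext_iff]
    split_ifs <;> first | omega | norm_num
  change D i ⬝ᵥ c = _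
  rw [hDi, sub_dotProduct, single_one_dotProduct, single_one_dotProduct]

lemma mulVec_apply_of_row_eq_one {i : Fin n} (hrow : ∀ j, D i j = 1) (c : Fin n → R) :
    (D *ᵥ c) i = ∑ j, c j := by
  simp [mulVec, dotProduct, hrow]

lemma mulVec_demean_indicator_Ioi {D : Matrix (Fin n) (Fin n) ℝ}
    (hD : ∀ i j : Fin n, (i : ℕ) < n - 1 →
      D i j = if (j : ℕ) = (i : ℕ) then -1 else if (j : ℕ) = (i : ℕ) + 1 then 1 else 0)
    (hones : ∀ i j : Fin n, (i : ℕ) = n - 1 → D i j = 1) {k : Fin n} (hk : (k : ℕ) < n - 1) :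
    D *ᵥ demean (fun i => if k < i then 1 else 0) = Pi.single k 1 := by
  ext i
  by_cases hi : (i : ℕ) < n - 1
  · rw [mulVec_apply_of_row_eq_diff (by omega) (hD i · hi), demean_sub_demean, Pi.single_apply]
    simp only [Fin.lt_def, Fin.ext_iff]
    split_ifs <;> first | omega | norm_num
  · have hik : i ≠ k := fun h => hi (h ▸ hk)
    rw [mulVec_apply_of_row_eq_one (hones i · (by omega)), sum_demean, Pi.single_eq_of_ne hik]

end DifferenceMatrix

theorem X1_transpose_centered_is_neg_cusum_general (n : ℕ)
    (Dtilde : Matrix (Fin n) (Fin n) ℝ)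
    (hD : ∀ i j : Fin n, (i : ℕ) < n - 1 →
      Dtilde i j = if (j : ℕ) = (i : ℕ) then -1
        else if (j : ℕ) = (i : ℕ) + 1 then 1 else 0)
    (hones : ∀ i j : Fin n, (i : ℕ) = n - 1 → Dtilde i j = 1)
    (hinv : IsUnit Dtilde)
    (X₁ : Matrix (Fin n) (Fin (n - 1)) ℝ)
    (hX₁ : ∀ i k, X₁ i k = Dtilde⁻¹ i (Fin.castLE (Nat.sub_le n 1) k))
    (P₂ : Matrix (Fin n) (Fin n) ℝ) (hP₂ : ∀ i j, P₂ i j = 1 / (n : ℝ))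
    (y : Fin n → ℝ) (ybar : ℝ) (hybar : ybar = (1 / (n : ℝ)) * ∑ i, y i) :
    ∀ k : Fin (n - 1),
      (X₁ᵀ.mulVec ((1 - P₂).mulVec y)) k
        = -∑ i ∈ univ.filter (fun i : Fin n => (i : ℕ) ≤ (k : ℕ)), (y i - ybar) := by
  intro k
  set k' : Fin n := Fin.castLE (Nat.sub_le n 1) k
  have hcol : ∀ i, X₁ i k = demean (fun i => if k' < i then 1 else 0) i := fun i => by
    rw [hX₁]
    exact inv_apply_eq_of_mulVec_eq_single hinv (mulVec_demean_indicator_Ioi hD hones k.isLt) i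
  have hproj : (1 - P₂) *ᵥ y = demean y := one_sub_mulVec_eq_demean (by simpa using hP₂) y
  have hy : ∀ i, demean y i = y i - ybar := by simp [demean_apply, hybar]
  calc (X₁ᵀ *ᵥ ((1 - P₂) *ᵥ y)) k
      = demean (fun i => if k' < i then 1 else 0) ⬝ᵥ demean y := by
        rw [hproj]
        simp only [mulVec, dotProduct, transpose_apply, hcol]
    _ = (fun i => if k' < i then 1 else 0) ⬝ᵥ demean y :=
        demean_dotProduct_of_sum_eq_zero _ (sum_demean y)
    _ = ∑ i ∈ univ.filter (fun i : Fin n => ¬ (i : ℕ) ≤ (k : ℕ)), demean y i := by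
        simp [dotProduct, Finset.sum_filter, Fin.lt_def, k']
    _ = -∑ i ∈ univ.filter (fun i : Fin n => (i : ℕ) ≤ (k : ℕ)), (y i - ybar) := by
        rw [← Finset.sum_congr rfl fun i _ => hy i, eq_neg_iff_add_eq_zero, add_comm,
          sum_filter_add_sum_filter_not, sum_demean]

/-- The `k`-th coordinate of `X₁ᵀ (I - P₂) y` is the negative cumulative sum
of the demeaned data up to index `k`, where `X₁` consists of the first `n-1`
columns of the inverse of the augmented difference matrix. -/
theorem X1_transpose_centered_is_neg_cusum (n : ℕ) (hn : 2 ≤ n)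
    (Dtilde : Matrix (Fin n) (Fin n) ℝ)
    (hD : ∀ i j : Fin n, (i : ℕ) < n - 1 →
      Dtilde i j = if (j : ℕ) = (i : ℕ) then -1
        else if (j : ℕ) = (i : ℕ) + 1 then 1 else 0)
    (hones : ∀ i j : Fin n, (i : ℕ) = n - 1 → Dtilde i j = 1)
    (hinv : IsUnit Dtilde)
    (X₁ : Matrix (Fin n) (Fin (n - 1)) ℝ)
    (hX₁ : ∀ i k, X₁ i k = Dtilde⁻¹ i (Fin.castLE (Nat.sub_le n 1) k))
    (P₂ : Matrix (Fin n) (Fin n) ℝ) (hP₂ : ∀ i j, P₂ i j = 1 / (n : ℝ))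
    (y : Fin n → ℝ) (ybar : ℝ) (hybar : ybar = (1 / (n : ℝ)) * ∑ i, y i) :
    ∀ k : Fin (n - 1),
      (X₁ᵀ.mulVec ((1 - P₂).mulVec y)) k
        = -∑ i ∈ univ.filter (fun i : Fin n => (i : ℕ) ≤ (k : ℕ)), (y i - ybar) :=
  X1_transpose_centered_is_neg_cusum_general n Dtilde hD hones hinv X₁ hX₁ P₂ hP₂ y ybar hybar
end

section
/- Equiangular direction update: let X_A ∈ ℝ^{n×m} and x_j ∈ ℝ^n with [X_A x_j] having full column rank. Set G = X_A^⊤X_A, u = X_A^⊤x_j, d = x_j^⊤x_j, τ = d - u^⊤G^{-1}u, and for signs s_A ∈ {±1}^m, s_k ∈ {±1}, define v_{old} = X_A G^{-1}s_A and v_{new} = [X_A x_j]([X_A x_j]^⊤[X_A x_j])^{-1}[s_A; s_k]. Then v_{new} - v_{old} = α·(I - P_A)x_j with α = τ^{-1}(s_k - u^⊤G^{-1}s_A), where P_A = X_A G^{-1}X_A^⊤. -/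
/-!
With `M = [X_A x_j]`, the vector `y = (G⁻¹ s_A - α G⁻¹ u, α)` solves the normal equations
`MᵀM y = (s_A, s_k)`: the first block reduces to `s_A` outright, and the last entry is
`uᵀG⁻¹s_A + α τ = s_k` by the choice of `α`. The Gram matrix `MᵀM` is invertible because, by the
Schur complement formula, its determinant is `det G · τ`. Hence
`v_new = M y = X_A G⁻¹ s_A + α (x_j - X_A G⁻¹ u) = v_old + α (I - P_A) x_j`.
-/

namespace Matrix

variable {ι κ 𝕜 : Type*} [Fintype ι] [Fintype κ] [DecidableEq κ] [Field 𝕜]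
  (A : Matrix ι κ 𝕜) (x : ι → 𝕜)

noncomputable def gramSchurComplement : 𝕜 :=
  x ⬝ᵥ x - (Aᵀ *ᵥ x) ⬝ᵥ (Aᵀ * A)⁻¹ *ᵥ (Aᵀ *ᵥ x)

theorem det_gram_fromCols_replicateCol (hA : IsUnit (Aᵀ * A).det) :
    ((fromCols A (replicateCol (Fin 1) x))ᵀ * fromCols A (replicateCol (Fin 1) x)).det =
      (Aᵀ * A).det * gramSchurComplement A x := by
  have hB : Aᵀ * replicateCol (Fin 1) x = replicateCol (Fin 1) (Aᵀ *ᵥ x) :=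
    (replicateCol_mulVec _ _).symm
  have hC : (replicateCol (Fin 1) x)ᵀ * A = replicateRow (Fin 1) (Aᵀ *ᵥ x) := by
    rw [mulVec_transpose, replicateRow_vecMul, transpose_replicateCol]
  let := invertibleOfIsUnitDet _ hA
  rw [transpose_fromCols, fromRows_mul_fromCols, det_fromBlocks₁₁, invOf_eq_nonsing_inv,
    det_fin_one, hB, hC, Matrix.mul_assoc, ← replicateCol_mulVec (Aᵀ * A)⁻¹,
    transpose_replicateCol, sub_apply, replicateRow_mul_replicateCol_apply,
    replicateRow_mul_replicateCol_apply]
  rfl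

omit [Fintype ι] [DecidableEq κ] in
theorem fromCols_replicateCol_mulVec_sumElim (a : κ → 𝕜) (c : 𝕜) :
    fromCols A (replicateCol (Fin 1) x) *ᵥ Sum.elim a (fun _ => c) = A *ᵥ a + c • x := by
  rw [fromCols_mulVec_sumElim]
  ext i
  simp [mulVec, dotProduct, mul_comm]

omit [Fintype κ] [DecidableEq κ] in
theorem transpose_fromCols_replicateCol_mulVec (z : ι → 𝕜) :
    (fromCols A (replicateCol (Fin 1) x))ᵀ *ᵥ z = Sum.elim (Aᵀ *ᵥ z) (fun _ => x ⬝ᵥ z) := by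
  rw [transpose_fromCols, fromRows_mulVec, transpose_replicateCol]
  rfl

theorem inv_gram_fromCols_replicateCol_mulVec_sumElim (hA : IsUnit (Aᵀ * A).det)
    (hτ : gramSchurComplement A x ≠ 0) (s : κ → 𝕜) (t : 𝕜) :
    let α := (gramSchurComplement A x)⁻¹ * (t - (Aᵀ *ᵥ x) ⬝ᵥ (Aᵀ * A)⁻¹ *ᵥ s)
    ((fromCols A (replicateCol (Fin 1) x))ᵀ * fromCols A (replicateCol (Fin 1) x))⁻¹ *ᵥ
        Sum.elim s (fun _ => t) =
      Sum.elim ((Aᵀ * A)⁻¹ *ᵥ s - α • (Aᵀ * A)⁻¹ *ᵥ (Aᵀ *ᵥ x)) (fun _ => α) := by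
  intro α
  have hM := (det_gram_fromCols_replicateCol A x hA).symm ▸ hA.mul (Ne.isUnit hτ)
  let := invertibleOfIsUnitDet _ hM
  let := invertibleOfIsUnitDet _ hA
  refine inv_mulVec_eq_vec ?_
  rw [← mulVec_mulVec, fromCols_replicateCol_mulVec_sumElim,
    transpose_fromCols_replicateCol_mulVec]
  congr 1
  · simp only [mulVec_add, mulVec_sub, mulVec_smul, mulVec_mulVec, ← Matrix.mul_assoc,
      mul_inv_of_invertible, Matrix.one_mul, one_mulVec, sub_add_cancel]
  · have hατ : α * gramSchurComplement A x = t - (Aᵀ *ᵥ x) ⬝ᵥ (Aᵀ * A)⁻¹ *ᵥ s := by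
      simp only [α]; field_simp
    ext
    rw [dotProduct_add, dotProduct_mulVec, ← mulVec_transpose, dotProduct_sub, dotProduct_smul,
      dotProduct_smul, smul_eq_mul, smul_eq_mul]
    unfold gramSchurComplement at hατ
    linear_combination -hατ

theorem fromCols_replicateCol_mulVec_inv_gram_sub [DecidableEq ι] (hA : IsUnit (Aᵀ * A).det)
    (hτ : gramSchurComplement A x ≠ 0) (s : κ → 𝕜) (t : 𝕜) :
    fromCols A (replicateCol (Fin 1) x) *ᵥ
        (((fromCols A (replicateCol (Fin 1) x))ᵀ * fromCols A (replicateCol (Fin 1) x))⁻¹ *ᵥ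
          Sum.elim s (fun _ => t)) - A *ᵥ ((Aᵀ * A)⁻¹ *ᵥ s) =
      ((gramSchurComplement A x)⁻¹ * (t - (Aᵀ *ᵥ x) ⬝ᵥ (Aᵀ * A)⁻¹ *ᵥ s)) •
        ((1 - A * (Aᵀ * A)⁻¹ * Aᵀ) *ᵥ x) := by
  rw [inv_gram_fromCols_replicateCol_mulVec_sumElim A x hA hτ,
    fromCols_replicateCol_mulVec_sumElim, sub_mulVec, one_mulVec, ← mulVec_mulVec, ← mulVec_mulVec,
    mulVec_sub, mulVec_smul]
  module

end Matrix

open Matrix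

theorem equiangular_direction_update_general (n m : ℕ)
    (XA : Matrix (Fin n) (Fin m) ℝ) (xj : Fin n → ℝ)
    (Xfull : Matrix (Fin n) (Fin m ⊕ Fin 1) ℝ)
    (hXfull : Xfull = fun i k => Sum.elim (fun j => XA i j) (fun _ => xj i) k)
    (G : Matrix (Fin m) (Fin m) ℝ) (hG : G = XAᵀ * XA) (hGunit : IsUnit G)
    (u : Fin m → ℝ) (hu : u = XAᵀ.mulVec xj)
    (d : ℝ) (hd : d = xj ⬝ᵥ xj)
    (τ : ℝ) (hτ : τ = d - u ⬝ᵥ G⁻¹.mulVec u) (hτpos : 0 < τ)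
    (sA : Fin m → ℝ)
    (sk : ℝ)
    (PA : Matrix (Fin n) (Fin n) ℝ) (hPA : PA = XA * G⁻¹ * XAᵀ)
    (vold vnew : Fin n → ℝ)
    (hvold : vold = XA.mulVec (G⁻¹.mulVec sA))
    (hvnew : vnew = Xfull.mulVec ((Xfullᵀ * Xfull)⁻¹.mulVec (Sum.elim sA (fun _ => sk)))) :
    vnew - vold = (τ⁻¹ * (sk - u ⬝ᵥ G⁻¹.mulVec sA)) • ((1 - PA).mulVec xj) := by
  obtain rfl : Xfull = fromCols XA (replicateCol (Fin 1) xj) := hXfull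
  subst hG hu hd hτ hPA hvold hvnew
  exact fromCols_replicateCol_mulVec_inv_gram_sub XA xj ((isUnit_iff_isUnit_det _).mp hGunit)
    hτpos.ne' sA sk

/-- Equiangular direction update for LARS: `v_new - v_old = α (I - P_A) x_j`
with `α = τ⁻¹ (s_k - uᵀ G⁻¹ s_A)`. -/
theorem equiangular_direction_update (n m : ℕ) (hn : 1 ≤ n) (hm : 1 ≤ m)
    (XA : Matrix (Fin n) (Fin m) ℝ) (xj : Fin n → ℝ)
    (Xfull : Matrix (Fin n) (Fin m ⊕ Fin 1) ℝ)
    (hXfull : Xfull = fun i k => Sum.elim (fun j => XA i j) (fun _ => xj i) k)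
    (hfull : IsUnit (Xfullᵀ * Xfull))
    (G : Matrix (Fin m) (Fin m) ℝ) (hG : G = XAᵀ * XA) (hGunit : IsUnit G)
    (u : Fin m → ℝ) (hu : u = XAᵀ.mulVec xj)
    (d : ℝ) (hd : d = xj ⬝ᵥ xj)
    (τ : ℝ) (hτ : τ = d - u ⬝ᵥ G⁻¹.mulVec u) (hτpos : 0 < τ)
    (sA : Fin m → ℝ) (hsA : ∀ i, sA i = 1 ∨ sA i = -1)
    (sk : ℝ) (hsk : sk = 1 ∨ sk = -1)
    (PA : Matrix (Fin n) (Fin n) ℝ) (hPA : PA = XA * G⁻¹ * XAᵀ)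
    (vold vnew : Fin n → ℝ)
    (hvold : vold = XA.mulVec (G⁻¹.mulVec sA))
    (hvnew : vnew = Xfull.mulVec ((Xfullᵀ * Xfull)⁻¹.mulVec (Sum.elim sA (fun _ => sk)))) :
    vnew - vold = (τ⁻¹ * (sk - u ⬝ᵥ G⁻¹.mulVec sA)) • ((1 - PA).mulVec xj) :=
  equiangular_direction_update_general n m XA xj Xfull hXfull G hG hGunit u hu d hd τ hτ hτpos sA sk
    PA hPA vold vnew hvold hvnew
end

section
/- Truncated normal CDF pivot: let Z ~ N(μ, σ²) with σ > 0, and a < b real numbers with P(a ≤ Z ≤ b) > 0. Define F(x) = (Φ((x-μ)/σ) - Φ((a-μ)/σ)) / (Φ((b-μ)/σ) - Φ((a-μ)/σ)) for x ∈ [a,b]. Then, conditional on the event {a ≤ Z ≤ b}, the random variable F(Z) is uniformly distributed on [0,1]. -/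
/-!
The law of `Z` has no atoms, so its CDF is continuous and the probability integral transform
applies: for an atomless law `ν` on `ℝ`, the sublevel sets `{cdf ν ≤ x}` are half-lines `Iic t`
with `cdf ν t = x`, hence `cdf ν` pushes `ν` forward to the uniform law on `[0, 1]`. The law of
`Z` conditioned on `[a, b]` is again atomless and lives on `[a, b]`, where its CDF is the
truncated CDF `F`, once the CDF of `N(μ, σ²)` is written as `Φ ((x - μ) / σ)`.
-/

open MeasureTheory ProbabilityTheory Set

lemma Monotone.exists_preimage_Iic_eq_Iic {f : ℝ → ℝ} (hmono : Monotone f) (hcont : Continuous f)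
    {x y₀ y₁ : ℝ} (hy₀ : x < f y₀) (hy₁ : f y₁ ≤ x) :
    ∃ t, f ⁻¹' Iic x = Iic t ∧ f t = x := by
  set S := f ⁻¹' Iic x
  have hle : ∀ y ∈ S, y ≤ y₀ := fun y hy => not_lt.1 fun h => (hy.trans_lt hy₀).not_ge (hmono h.le)
  have hbdd : BddAbove S := ⟨y₀, hle⟩
  have ht : sSup S ∈ S := (isClosed_Iic.preimage hcont).csSup_mem ⟨y₁, hy₁⟩ hbdd
  have hS_eq : S = Iic (sSup S) :=
    Subset.antisymm (fun y hy => le_csSup hbdd hy) fun y hy => (hmono hy).trans ht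
  refine ⟨sSup S, hS_eq, le_antisymm ht (not_lt.1 fun hlt => ?_)⟩
  obtain ⟨s, hs, hfs⟩ := intermediate_value_Icc (hle _ ht) hcont.continuousOn ⟨hlt.le, hy₀.le⟩
  have hst : s = sSup S := le_antisymm (le_csSup hbdd hfs.le) hs.1
  exact hlt.ne (hst ▸ hfs)

lemma volume_Iic_inter_Icc_zero_one (x : ℝ) :
    volume (Iic x ∩ Icc 0 1) = ENNReal.ofReal (min x 1) := by
  have h : Iic x ∩ Icc 0 1 = Icc 0 (min x 1) := by
    ext y
    simp only [mem_inter_iff, mem_Iic, mem_Icc, le_min_iff]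
    tauto
  rw [h, Real.volume_Icc, sub_zero]

namespace ProbabilityTheory

variable (ν : Measure ℝ) [IsProbabilityMeasure ν]

lemma continuous_cdf [NullSingletonClass ν] : Continuous (cdf ν) := by
  refine continuous_iff_continuousAt.2 fun x => ?_
  rw [(monotone_cdf ν).continuousAt_iff_leftLim_eq_rightLim, (cdf ν).rightLim_eq]
  have h : ENNReal.ofReal (cdf ν x - Function.leftLim (cdf ν) x) = 0 := by
    rw [← StieltjesFunction.measure_singleton, measure_cdf, measure_singleton]
  exact le_antisymm ((monotone_cdf ν).leftLim_le le_rfl) (by linarith [ENNReal.ofReal_eq_zero.1 h])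

lemma measure_Icc_eq_ofReal_cdf_sub [NullSingletonClass ν] (a b : ℝ) :
    ν (Icc a b) = ENNReal.ofReal (cdf ν b - cdf ν a) := by
  rw [← measure_congr Ioc_ae_eq_Icc, ← StieltjesFunction.measure_Ioc, measure_cdf]

lemma measure_cdf_preimage_Iic [NullSingletonClass ν] (x : ℝ) :
    ν (cdf ν ⁻¹' Iic x) = ENNReal.ofReal (min x 1) := by
  rcases le_or_gt 1 x with hx1 | hx1
  · have huniv : cdf ν ⁻¹' Iic x = univ := eq_univ_of_forall fun y => (cdf_le_one ν y).trans hx1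
    rw [huniv, measure_univ, min_eq_right hx1, ENNReal.ofReal_one]
  obtain ⟨y₀, hy₀⟩ := ((tendsto_cdf_atTop ν).eventually (lt_mem_nhds hx1)).exists
  rw [min_eq_left hx1.le]
  by_cases hS : ∀ y, x < cdf ν y
  · have hx0 : x ≤ 0 := ge_of_tendsto' (tendsto_cdf_atBot ν) fun y => (hS y).le
    have hempty : cdf ν ⁻¹' Iic x = ∅ :=
      eq_empty_of_forall_notMem fun y (hy : cdf ν y ≤ x) => (hS y).not_ge hy
    rw [hempty, measure_empty, ENNReal.ofReal_of_nonpos hx0]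
  · obtain ⟨y₁, hy₁⟩ := not_forall.1 hS
    obtain ⟨t, hS_eq, ht⟩ :=
      (monotone_cdf ν).exists_preimage_Iic_eq_Iic (continuous_cdf ν) hy₀ (not_lt.1 hy₁)
    rw [hS_eq, ← ofReal_cdf, ht]

theorem map_cdf_eq_volume_restrict_Icc [NullSingletonClass ν] :
    ν.map (cdf ν) = volume.restrict (Icc 0 1) := by
  have hmeas : Measurable (cdf ν) := (monotone_cdf ν).measurable
  have := Measure.isProbabilityMeasure_map (μ := ν) hmeas.aemeasurable
  refine Measure.ext_of_Iic _ _ fun x => ?_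
  rw [Measure.map_apply hmeas measurableSet_Iic, measure_cdf_preimage_Iic,
    Measure.restrict_apply measurableSet_Iic, volume_Iic_inter_Icc_zero_one]

lemma cdf_cond_Icc [NullSingletonClass ν] {a b x : ℝ} (hν : ν (Icc a b) ≠ 0) (hx : x ∈ Icc a b) :
    cdf (ν[|Icc a b]) x = (cdf ν x - cdf ν a) / (cdf ν b - cdf ν a) := by
  have h : Icc a b ∩ Iic x = Icc a x := by
    ext y
    simp only [mem_inter_iff, mem_Icc, mem_Iic]
    constructor
    · rintro ⟨⟨hay, -⟩, hyx⟩
      exact ⟨hay, hyx⟩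
    · rintro ⟨hay, hyx⟩
      exact ⟨⟨hay, hyx.trans hx.2⟩, hyx⟩
  have := cond_isProbabilityMeasure hν
  have hmono := monotone_cdf ν
  rw [cdf_eq_real, measureReal_def, cond_apply measurableSet_Icc, h,
    measure_Icc_eq_ofReal_cdf_sub, measure_Icc_eq_ofReal_cdf_sub, ENNReal.toReal_mul,
    ENNReal.toReal_inv, ENNReal.toReal_ofReal (sub_nonneg.2 (hmono hx.1)),
    ENNReal.toReal_ofReal (sub_nonneg.2 (hmono (hx.1.trans hx.2))), div_eq_inv_mul]

theorem map_cond_Icc_eq_volume_restrict_Icc [NullSingletonClass ν] {a b : ℝ}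
    (hν : ν (Icc a b) ≠ 0) :
    (ν[|Icc a b]).map (fun x => (cdf ν x - cdf ν a) / (cdf ν b - cdf ν a)) =
      volume.restrict (Icc 0 1) := by
  have := cond_isProbabilityMeasure hν
  have : NullSingletonClass (ν[|Icc a b]) :=
    ⟨fun x => cond_absolutelyContinuous (measure_singleton x)⟩
  rw [← map_cdf_eq_volume_restrict_Icc (ν[|Icc a b])]
  refine Measure.map_congr ?_
  filter_upwards [ae_cond_mem measurableSet_Icc] with x hx
  exact (cdf_cond_Icc ν hν hx).symm

lemma cdf_map_mul_add {σ : ℝ} (hσ : 0 < σ) (μ x : ℝ) :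
    cdf (ν.map fun y => σ * y + μ) x = cdf ν ((x - μ) / σ) := by
  have hmeas : Measurable fun y => σ * y + μ := by fun_prop
  have := Measure.isProbabilityMeasure_map (μ := ν) hmeas.aemeasurable
  have hpre : (fun y => σ * y + μ) ⁻¹' Iic x = Iic ((x - μ) / σ) := by
    ext y
    simp only [mem_preimage, mem_Iic, le_div_iff₀ hσ]
    constructor <;> intro h <;> linarith
  rw [cdf_eq_real, cdf_eq_real, map_measureReal_apply hmeas measurableSet_Iic, hpre]

lemma gaussianReal_eq_map_mul_add (μ σ : ℝ) :
    gaussianReal μ (σ ^ 2).toNNReal = (gaussianReal 0 1).map fun y => σ * y + μ := by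
  have hcomp : (fun y => σ * y + μ) = (· + μ) ∘ (σ * ·) := rfl
  rw [hcomp, ← Measure.map_map (by fun_prop) (by fun_prop), gaussianReal_map_const_mul,
    gaussianReal_map_add_const, mul_zero, zero_add, mul_one]
  congr
  ext
  simp [Real.coe_toNNReal _ (sq_nonneg σ)]

lemma cdf_gaussianReal (μ : ℝ) {σ : ℝ} (hσ : 0 < σ) (x : ℝ) :
    cdf (gaussianReal μ (σ ^ 2).toNNReal) x = cdf (gaussianReal 0 1) ((x - μ) / σ) := by
  rw [gaussianReal_eq_map_mul_add μ σ, cdf_map_mul_add _ hσ]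

end ProbabilityTheory

theorem truncated_normal_cdf_pivot_general (μ σ a b : ℝ) (hσ : 0 < σ)
    (P : Measure ℝ) (hP : P = gaussianReal μ (Real.toNNReal (σ ^ 2)))
    (hpos : 0 < P (Set.Icc a b))
    (Φ : ℝ → ℝ) (hΦ : Φ = fun t => cdf (gaussianReal 0 1) t)
    (F : ℝ → ℝ)
    (hF : F = fun x =>
      (Φ ((x - μ) / σ) - Φ ((a - μ) / σ)) / (Φ ((b - μ) / σ) - Φ ((a - μ) / σ))) :
    (P[|Set.Icc a b]).map F = volume.restrict (Set.Icc (0 : ℝ) 1) := by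
  subst hP hΦ hF
  have : NullSingletonClass (gaussianReal μ (σ ^ 2).toNNReal) :=
    nullSingletonClass_gaussianReal (by simpa using hσ.ne')
  simp only [← cdf_gaussianReal μ hσ]
  exact map_cond_Icc_eq_volume_restrict_Icc _ hpos.ne'

/-- Truncated normal CDF pivot: conditional on `{a ≤ Z ≤ b}`, the random
variable `F(Z)` is uniform on `[0,1]`, where `F` is the truncated normal CDF. -/
theorem truncated_normal_cdf_pivot (μ σ a b : ℝ) (hσ : 0 < σ) (hab : a < b)
    (P : Measure ℝ) (hP : P = gaussianReal μ (Real.toNNReal (σ ^ 2)))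
    (hpos : 0 < P (Set.Icc a b))
    (Φ : ℝ → ℝ) (hΦ : Φ = fun t => cdf (gaussianReal 0 1) t)
    (F : ℝ → ℝ)
    (hF : F = fun x =>
      (Φ ((x - μ) / σ) - Φ ((a - μ) / σ)) / (Φ ((b - μ) / σ) - Φ ((a - μ) / σ))) :
    (P[|Set.Icc a b]).map F = volume.restrict (Set.Icc (0 : ℝ) 1) :=
  truncated_normal_cdf_pivot_general μ σ a b hσ P hP hpos Φ hΦ F hF
end

section
/- Polyhedral lemma: let A ∈ ℝ^{m×n}, b ∈ ℝ^m, η ∈ ℝ^n nonzero, c = η/‖η‖₂², and for y ∈ ℝ^n set z = (I - cη^⊤)y. Then {y : Ay ≤ b} = {y : ν⁻(z) ≤ η^⊤y ≤ ν⁺(z) and ν⁰(z) ≥ 0}, where ν⁻(z) = max over j with (Ac)_j < 0 of (b_j - (Az)_j)/(Ac)_j, ν⁺(z) = min over j with (Ac)_j > 0 of (b_j - (Az)_j)/(Ac)_j, and ν⁰(z) = min over j with (Ac)_j = 0 of b_j - (Az)_j (taking max/min over empty sets as -∞/+∞ as appropriate). -/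
/-! Since `y = z + (ηᵀy) c`, row `j` of `Ay ≤ b` is the single linear constraint
`(Az)ⱼ + (ηᵀy)(Ac)ⱼ ≤ bⱼ` on the scalar `ηᵀy`; dividing by `(Ac)ⱼ` according to its sign
gives the three families of conditions. -/

open Matrix

theorem mulVec_eq_add_smul_mulVec {R m n : Type*} [CommRing R] [Fintype n]
    (A : Matrix m n R) {y z c : n → R} {t : R} (hz : z = y - t • c) :
    A *ᵥ y = A *ᵥ z + t • A *ᵥ c := by
  rw [hz, mulVec_sub, mulVec_smul, sub_add_cancel]

theorem add_mul_le_iff_div_bounds {K : Type*} [Field K] [LinearOrder K] [IsStrictOrderedRing K]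
    {a p q t : K} :
    a + t * p ≤ q ↔
      (p < 0 → (q - a) / p ≤ t) ∧ (0 < p → t ≤ (q - a) / p) ∧ (p = 0 → 0 ≤ q - a) := by
  refine ⟨fun h => ⟨fun hp => ?_, fun hp => ?_, fun hp => ?_⟩, fun ⟨hneg, hpos, hzero⟩ => ?_⟩
  · rw [div_le_iff_of_neg hp]; linarith
  · rw [le_div_iff₀ hp]; linarith
  · subst hp; linarith
  · rcases lt_trichotomy p 0 with hp | rfl | hp
    · have := (div_le_iff_of_neg hp).1 (hneg hp); linarith
    · simpa using hzero rfl
    · have := (le_div_iff₀ hp).1 (hpos hp); linarith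

theorem polyhedral_lemma_general (m n : ℕ) (A : Matrix (Fin m) (Fin n) ℝ) (b : Fin m → ℝ)
    (η : Fin n → ℝ)
    (c : Fin n → ℝ) (y : Fin n → ℝ)
    (z : Fin n → ℝ) (hz : z = y - (η ⬝ᵥ y) • c) :
    A.mulVec y ≤ b ↔
      ((∀ j, (A.mulVec c) j < 0 →
          (b j - (A.mulVec z) j) / (A.mulVec c) j ≤ η ⬝ᵥ y) ∧
       (∀ j, 0 < (A.mulVec c) j →
          η ⬝ᵥ y ≤ (b j - (A.mulVec z) j) / (A.mulVec c) j) ∧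
       (∀ j, (A.mulVec c) j = 0 → 0 ≤ b j - (A.mulVec z) j)) := by
  rw [mulVec_eq_add_smul_mulVec A hz, Pi.le_def]
  simp only [Pi.add_apply, Pi.smul_apply, smul_eq_mul, add_mul_le_iff_div_bounds, forall_and]

/-- Polyhedral lemma: with `c = η/‖η‖²` and `z = y - (ηᵀy) c`, the polyhedron
`{Ay ≤ b}` is described by `ν⁻(z) ≤ ηᵀy ≤ ν⁺(z)` and `ν⁰(z) ≥ 0`, stated
pointwise over the rows (which handles empty index sets as `±∞`). -/
theorem polyhedral_lemma (m n : ℕ) (A : Matrix (Fin m) (Fin n) ℝ) (b : Fin m → ℝ)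
    (η : Fin n → ℝ) (hη : η ≠ 0)
    (c : Fin n → ℝ) (hc : c = (∑ i, η i ^ 2)⁻¹ • η) (y : Fin n → ℝ)
    (z : Fin n → ℝ) (hz : z = y - (η ⬝ᵥ y) • c) :
    A.mulVec y ≤ b ↔
      ((∀ j, (A.mulVec c) j < 0 →
          (b j - (A.mulVec z) j) / (A.mulVec c) j ≤ η ⬝ᵥ y) ∧
       (∀ j, 0 < (A.mulVec c) j →
          η ⬝ᵥ y ≤ (b j - (A.mulVec z) j) / (A.mulVec c) j) ∧
       (∀ j, (A.mulVec c) j = 0 → 0 ≤ b j - (A.mulVec z) j)) :=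
  polyhedral_lemma_general m n A b η c y z hz
end

section
/- First knot of the fused-lasso path via CUSUM: for y ∈ ℝ^n, the largest λ for which the fused lasso solution argmin_μ ½‖y-μ‖² + λ‖Dμ‖₁ is constant (μ̂_1 = … = μ̂_n = ȳ) equals λ₁ = max_{1≤k≤n-1} |∑_{i=1}^k (y_i - ȳ)|. -/
/-!
Write `a = y - ȳ` and `S k = a 0 + ⋯ + a k`, so that the full sum of `a` vanishes. Summation by
parts turns `⟪a, μ⟫` into `-∑ j, S j * (Dμ) j`, whence
`f μ - f (ȳ𝟙) = ½ ‖μ - ȳ𝟙‖² + ∑ j, (λ |(Dμ) j| + S j * (Dμ) j)`.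
If every `|S j| ≤ λ`, each summand is nonnegative. Conversely, shifting all entries after position
`k` by `t` changes only `(Dμ) k`, and the gap becomes `C t² + λ |t| + S k * t`, which is negative
for small `t` of sign opposite to `S k` as soon as `|S k| > λ`.
-/

open Finset

namespace FusedLasso

variable {n : ℕ}

section CommRing

variable {R : Type*} [CommRing R]

def diff (μ : Fin n → R) (j : Fin (n - 1)) : R :=
  μ ⟨j + 1, Nat.add_lt_of_lt_sub j.isLt⟩ - μ (Fin.castLE (Nat.sub_le n 1) j)

def cusum (a : Fin n → R) (k : Fin (n - 1)) : R :=
  ∑ i ∈ univ.filter (fun i : Fin n => (i : ℕ) ≤ k), a i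

theorem sum_range_mul_eq_neg_sum_partialSum_mul_sub (a m : ℕ → R)
    (ha : ∑ i ∈ range n, a i = 0) :
    ∑ i ∈ range n, a i * m i
      = -∑ j ∈ range (n - 1), (∑ i ∈ range (j + 1), a i) * (m (j + 1) - m j) := by
  have := sum_range_by_parts m a n
  simp only [smul_eq_mul, ha, mul_zero, zero_sub] at this
  simp only [mul_comm (a _), mul_comm (∑ i ∈ range _, a i), this]

def extendByZero (a : Fin n → R) (i : ℕ) : R :=
  if h : i < n then a ⟨i, h⟩ else 0

@[simp]
theorem extendByZero_val (a : Fin n → R) (i : Fin n) : extendByZero a i = a i := by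
  simp [extendByZero]

theorem sum_eq_sum_range_extendByZero (a : Fin n → R) :
    ∑ i, a i = ∑ i ∈ range n, extendByZero a i :=
  sum_fin_eq_sum_range a

theorem diff_eq_extendByZero_sub (μ : Fin n → R) (j : Fin (n - 1)) :
    diff μ j = extendByZero μ (j + 1) - extendByZero μ j := by
  simp only [diff, extendByZero, dif_pos (Nat.add_lt_of_lt_sub j.isLt),
    dif_pos (j.isLt.trans_le (Nat.sub_le n 1))]
  rfl

theorem cusum_eq_sum_range_extendByZero (a : Fin n → R) (k : Fin (n - 1)) :
    cusum a k = ∑ i ∈ range (k + 1), extendByZero a i := by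
  have hk : (k : ℕ) + 1 ≤ n := by omega
  rw [cusum, sum_filter, sum_eq_sum_range_extendByZero, ← sum_range_add_sum_Ico _ hk,
    sum_eq_zero (s := Ico _ _) fun i hi => by grind [extendByZero], add_zero]
  exact sum_congr rfl fun i hi => by grind [extendByZero]

theorem sum_mul_eq_neg_sum_cusum_mul_diff (a μ : Fin n → R) (ha : ∑ i, a i = 0) :
    ∑ i, a i * μ i = -∑ j, cusum a j * diff μ j := by
  simp only [cusum_eq_sum_range_extendByZero, diff_eq_extendByZero_sub]
  rw [sum_eq_sum_range_extendByZero] at ha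
  rw [Fin.sum_univ_eq_sum_range (fun j => (∑ i ∈ range (j + 1), extendByZero a i) *
      (extendByZero μ (j + 1) - extendByZero μ j)),
    ← sum_range_mul_eq_neg_sum_partialSum_mul_sub _ _ ha, ← Fin.sum_univ_eq_sum_range]
  simp

theorem diff_const (c : R) (j : Fin (n - 1)) : diff (fun _ : Fin n => c) j = 0 :=
  sub_self c

theorem diff_sub_const (μ : Fin n → R) (c : R) (j : Fin (n - 1)) :
    diff (fun i => μ i - c) j = diff μ j :=
  sub_sub_sub_cancel_right _ _ c

theorem diff_const_add_mul (c t : R) (v : Fin n → R) (j : Fin (n - 1)) :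
    diff (fun i => c + t * v i) j = t * diff v j := by
  simp only [diff]; ring

theorem diff_indicator_lt (k j : Fin (n - 1)) :
    diff (fun i : Fin n => if (k : ℕ) < i then (1 : R) else 0) j = if j = k then 1 else 0 := by
  simp only [diff, Fin.val_castLE, Fin.ext_iff]
  split_ifs <;> grind

end CommRing

theorem abs_le_of_forall_mul_sq_add_mul_abs_add_mul_nonneg {C lam s : ℝ} (hC : 0 ≤ C)
    (h : ∀ t, 0 ≤ C * t ^ 2 + lam * |t| + s * t) : |s| ≤ lam := by
  have one_sided : ∀ s', (∀ t > 0, 0 ≤ C * t ^ 2 + lam * t - s' * t) → s' ≤ lam := by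
    intro s' hs'
    by_contra! hlt
    -- at `t = (s' - lam) / (C + 1)` the quadratic equals `-t ^ 2`
    have ht : 0 < (s' - lam) / (C + 1) := div_pos (by linarith) (by linarith)
    have hmul : (s' - lam) / (C + 1) * (C + 1) = s' - lam := div_mul_cancel₀ _ (by linarith)
    nlinarith [hs' _ ht]
  refine abs_le.mpr ⟨neg_le.mp (one_sided (-s) fun t ht => ?_), one_sided s fun t ht => ?_⟩
  · simpa [abs_of_pos ht] using h t
  · simpa [abs_of_pos ht, sub_eq_add_neg] using h (-t)

theorem sum_sub_mean_eq_zero (y : Fin n → ℝ) : ∑ i, (y i - 1 / (n : ℝ) * ∑ j, y j) = 0 := by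
  rcases Nat.eq_zero_or_pos n with rfl | hn
  · simp
  · rw [sum_sub_distrib, sum_const, card_univ, Fintype.card_fin, nsmul_eq_mul]
    field_simp
    ring

noncomputable def objective (y : Fin n → ℝ) (lam : ℝ) (μ : Fin n → ℝ) : ℝ :=
  1 / 2 * ∑ i, (y i - μ i) ^ 2 + lam * ∑ j, |diff μ j|

theorem objective_sub_objective_const (y μ : Fin n → ℝ) (lam c : ℝ)
    (hc : ∑ i, (y i - c) = 0) :
    objective y lam μ - objective y lam (fun _ => c)
      = 1 / 2 * ∑ i, (μ i - c) ^ 2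
        + ∑ j, (lam * |diff μ j| + cusum (fun i => y i - c) j * diff μ j) := by
  have hcross := sum_mul_eq_neg_sum_cusum_mul_diff (fun i => y i - c) (fun i => μ i - c) hc
  simp only [diff_sub_const] at hcross
  have hsq : ∑ i, (y i - μ i) ^ 2
      = ∑ i, (y i - c) ^ 2 + ∑ i, (μ i - c) ^ 2 - 2 * ∑ i, (y i - c) * (μ i - c) := by
    rw [mul_sum, ← sum_add_distrib, ← sum_sub_distrib]
    exact sum_congr rfl fun i _ => by ring
  simp only [objective, diff_const, abs_zero, sum_const_zero, mul_zero, add_zero, hsq, hcross,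
    sum_add_distrib, ← mul_sum]
  ring

theorem isMinOn_objective_const_of_abs_cusum_le {y : Fin n → ℝ} {lam c : ℝ}
    (hc : ∑ i, (y i - c) = 0) (h : ∀ j, |cusum (fun i => y i - c) j| ≤ lam) :
    IsMinOn (objective y lam) Set.univ (fun _ => c) := by
  refine isMinOn_univ_iff.mpr fun μ => sub_nonneg.mp ?_
  rw [objective_sub_objective_const y μ lam c hc]
  refine add_nonneg (by positivity) (sum_nonneg fun j _ => ?_)
  have := neg_abs_le (cusum (fun i => y i - c) j * diff μ j)
  rw [abs_mul] at this
  nlinarith [mul_le_mul_of_nonneg_right (h j) (abs_nonneg (diff μ j))]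

theorem abs_cusum_le_of_isMinOn_objective_const {y : Fin n → ℝ} {lam c : ℝ}
    (hc : ∑ i, (y i - c) = 0) (hmin : IsMinOn (objective y lam) Set.univ (fun _ => c))
    (k : Fin (n - 1)) : |cusum (fun i => y i - c) k| ≤ lam := by
  set v : Fin n → ℝ := fun i => if (k : ℕ) < i then 1 else 0
  refine abs_le_of_forall_mul_sq_add_mul_abs_add_mul_nonneg (C := 1 / 2 * ∑ i, v i ^ 2)
    (by positivity) fun t => ?_
  have hv : ∀ j, diff v j = if j = k then 1 else 0 := diff_indicator_lt k
  have hpen : ∑ j, (lam * |t * diff v j| + cusum (fun i => y i - c) j * (t * diff v j))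
      = lam * |t| + cusum (fun i => y i - c) k * t := by
    rw [Fintype.sum_eq_single k fun j hj => by simp [hv, hj]]
    simp [hv]
  have hgap := objective_sub_objective_const y (fun i => c + t * v i) lam c hc
  simp only [diff_const_add_mul, hpen, add_sub_cancel_left, mul_pow, ← mul_sum] at hgap
  linarith [sub_nonneg.mpr (isMinOn_univ_iff.mp hmin (fun i => c + t * v i))]

end FusedLasso

open FusedLasso

/-- First knot of the fused-lasso path via CUSUM: for `λ > 0`, the constant
vector `ȳ 𝟙` minimizes `½‖y-μ‖² + λ‖Dμ‖₁` if and only if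
`λ ≥ λ₁ = max_k |∑_{i=1}^k (y_i - ȳ)|`. -/
theorem fused_lasso_first_knot (n : ℕ) (y : Fin n → ℝ)
    (ybar : ℝ) (hybar : ybar = (1 / (n : ℝ)) * ∑ i, y i)
    (f : ℝ → (Fin n → ℝ) → ℝ)
    (hf : f = fun lam μ => (1 / 2) * ∑ i, (y i - μ i) ^ 2
      + lam * ∑ j : Fin (n - 1),
          |μ ⟨(j : ℕ) + 1, by have := j.isLt; omega⟩
            - μ (Fin.castLE (Nat.sub_le n 1) j)|)
    (lam1 : ℝ)
    (hlam1 : lam1 = ⨆ k : Fin (n - 1),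
      |∑ i ∈ univ.filter (fun i : Fin n => (i : ℕ) ≤ (k : ℕ)), (y i - ybar)|) :
    ∀ lam : ℝ, 0 < lam →
      (IsMinOn (f lam) Set.univ (fun _ => ybar) ↔ lam1 ≤ lam) := by
  intro lam hlam
  have hc : ∑ i, (y i - ybar) = 0 := hybar ▸ sum_sub_mean_eq_zero y
  have hf_lam : f lam = objective y lam := by rw [hf]; rfl
  rw [hf_lam, hlam1]
  constructor
  · intro hmin
    exact Real.iSup_le (abs_cusum_le_of_isMinOn_objective_const hc hmin) hlam.le
  · intro hle
    exact isMinOn_objective_const_of_abs_cusum_le hc fun k =>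
      (le_ciSup (Set.finite_range _).bddAbove k).trans hle
end

section
/- Reduction of the fused lasso to an ordinary lasso: let D̃ be the augmented difference matrix with inverse [X₁ X₂], P₂ = X₂(X₂^⊤X₂)^{-1}X₂^⊤, ỹ = (I-P₂)y, X̃ = (I-P₂)X₁. Then μ̂ minimizes ½‖y-μ‖² + λ‖Dμ‖₁ over μ ∈ ℝ^n if and only if μ̂ = X₁φ̂ + X₂φ̂₂ where φ̂ minimizes ½‖ỹ - X̃φ‖² + λ‖φ‖₁ over φ ∈ ℝ^{n-1} and φ̂₂ = (X₂^⊤X₂)^{-1}X₂^⊤(y - X₁φ̂). -/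
/-! Every `μ` is `X₁ φ + X₂ t` for the columns `[X₁ X₂] = D̃⁻¹`, and then `D μ = φ`, so the
penalty depends on `φ` alone. The loss splits orthogonally along `P₂`:
`‖y - X₁ φ - X₂ t‖² = ‖(1 - P₂)(y - X₁ φ)‖² + ‖X₂ (t̂ - t)‖²`, `t̂ = (X₂ᵀX₂)⁻¹X₂ᵀ(y - X₁ φ)`.
Minimizing over `t` first therefore leaves the lasso objective in `φ`, attained exactly where
`X₂ t = X₂ t̂`. -/

open Matrix

section Projection

variable {ι κ R : Type*} [Fintype ι] [Fintype κ] [DecidableEq ι] [DecidableEq κ] [CommRing R]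

theorem Matrix.transpose_mul_one_sub_proj (X : Matrix ι κ R) (hX : IsUnit (Xᵀ * X).det) :
    Xᵀ * (1 - X * (Xᵀ * X)⁻¹ * Xᵀ) = 0 := by
  rw [Matrix.mul_sub, Matrix.mul_one, ← Matrix.mul_assoc, ← Matrix.mul_assoc,
    mul_nonsing_inv _ hX, Matrix.one_mul, sub_self]

theorem Matrix.mulVec_dotProduct_one_sub_proj_mulVec (X : Matrix ι κ R)
    (hX : IsUnit (Xᵀ * X).det) (v : κ → R) (r : ι → R) :
    (X *ᵥ v) ⬝ᵥ ((1 - X * (Xᵀ * X)⁻¹ * Xᵀ) *ᵥ r) = 0 := by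
  rw [dotProduct_mulVec, ← vecMul_transpose, vecMul_vecMul, transpose_mul_one_sub_proj X hX,
    vecMul_zero, zero_dotProduct]

/-- Pythagoras for the orthogonal splitting `r = (1 - P) r + P r` with `P r = X ŝ`. -/
theorem Matrix.sub_mulVec_dotProduct_self (X : Matrix ι κ R) (hX : IsUnit (Xᵀ * X).det)
    (r : ι → R) (t : κ → R) :
    (r - X *ᵥ t) ⬝ᵥ (r - X *ᵥ t)
      = ((1 - X * (Xᵀ * X)⁻¹ * Xᵀ) *ᵥ r) ⬝ᵥ ((1 - X * (Xᵀ * X)⁻¹ * Xᵀ) *ᵥ r)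
        + (X *ᵥ (((Xᵀ * X)⁻¹ * Xᵀ) *ᵥ r - t)) ⬝ᵥ (X *ᵥ (((Xᵀ * X)⁻¹ * Xᵀ) *ᵥ r - t)) := by
  set a := (1 - X * (Xᵀ * X)⁻¹ * Xᵀ) *ᵥ r
  set b := X *ᵥ (((Xᵀ * X)⁻¹ * Xᵀ) *ᵥ r - t)
  have hsplit : r - X *ᵥ t = a + b := by
    simp only [a, b, sub_mulVec, one_mulVec, mulVec_sub, mulVec_mulVec, Matrix.mul_assoc]
    abel
  have horth : b ⬝ᵥ a = 0 := mulVec_dotProduct_one_sub_proj_mulVec X hX _ r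
  rw [hsplit, add_dotProduct, dotProduct_add, dotProduct_add, horth, dotProduct_comm a b, horth]
  ring

end Projection

theorem Matrix.isUnit_det_transpose_mul_self {ι κ K : Type*} [Fintype ι] [Fintype κ]
    [DecidableEq κ] [Field K] [LinearOrder K] [IsStrictOrderedRing K] {X : Matrix ι κ K}
    (hX : Function.Injective X.mulVec) : IsUnit (Xᵀ * X).det := by
  rw [← isUnit_iff_isUnit_det, ← mulVec_injective_iff_isUnit]
  have hker : Function.Injective (Xᵀ * X).mulVecLin := by
    rw [← LinearMap.ker_eq_bot, ker_mulVecLin_transpose_mul_self, LinearMap.ker_eq_bot]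
    exact hX
  exact hker

theorem isMinOn_univ_iff_of_eq_add {α β γ M : Type*} [AddCommMonoid M] [LinearOrder M]
    [IsOrderedCancelAddMonoid M] {F : γ → M} {G : α → M} {Q : α → β → M}
    (e : α → β → γ) (s : α → β) (he : ∀ x, ∃ a b, e a b = x)
    (hF : ∀ a b, F (e a b) = G a + Q a b) (hQ : ∀ a b, 0 ≤ Q a b) (hQs : ∀ a, Q a (s a) = 0)
    (hQ_eq_zero : ∀ a b, Q a b = 0 → e a b = e a (s a)) (x : γ) :
    IsMinOn F Set.univ x ↔ ∃ a, IsMinOn G Set.univ a ∧ x = e a (s a) := by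
  have hFs : ∀ a, F (e a (s a)) = G a := fun a => by rw [hF, hQs, add_zero]
  have hGF : ∀ a b, G a ≤ F (e a b) := fun a b => hF a b ▸ le_add_of_nonneg_right (hQ a b)
  simp only [isMinOn_univ_iff]
  constructor
  · intro hx
    obtain ⟨a, b, rfl⟩ := he x
    have hQ0 : Q a b = 0 := by
      refine le_antisymm ?_ (hQ a b)
      have := hx (e a (s a))
      rwa [hF, hFs, add_le_iff_nonpos_right] at this
    refine ⟨a, fun a' => ?_, hQ_eq_zero a b hQ0⟩
    calc G a = F (e a b) := by rw [hF, hQ0, add_zero]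
      _ ≤ F (e a' (s a')) := hx _
      _ = G a' := hFs a'
  · rintro ⟨a, ha, rfl⟩ x
    obtain ⟨a', b', rfl⟩ := he x
    exact (hFs a).trans_le ((ha a').trans (hGF a' b'))

theorem isMinOn_half_sq_add_penalty_iff {ι κ₁ κ₂ : Type*} [Fintype ι] [Fintype κ₁]
    [Fintype κ₂] [DecidableEq ι] [DecidableEq κ₂]
    (X₁ : Matrix ι κ₁ ℝ) (X₂ : Matrix ι κ₂ ℝ) (hX₂ : IsUnit (X₂ᵀ * X₂).det)
    (hspan : ∀ μ, ∃ φ t, X₁ *ᵥ φ + X₂ *ᵥ t = μ)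
    (pen : (ι → ℝ) → ℝ) (pen' : (κ₁ → ℝ) → ℝ) (hpen : ∀ φ t, pen (X₁ *ᵥ φ + X₂ *ᵥ t) = pen' φ)
    (y μhat : ι → ℝ) :
    IsMinOn (fun μ => 1 / 2 * (y - μ) ⬝ᵥ (y - μ) + pen μ) Set.univ μhat ↔
      ∃ φhat, IsMinOn (fun φ => 1 / 2 * ((1 - X₂ * (X₂ᵀ * X₂)⁻¹ * X₂ᵀ) *ᵥ (y - X₁ *ᵥ φ))
            ⬝ᵥ ((1 - X₂ * (X₂ᵀ * X₂)⁻¹ * X₂ᵀ) *ᵥ (y - X₁ *ᵥ φ)) + pen' φ) Set.univ φhat ∧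
        μhat = X₁ *ᵥ φhat + X₂ *ᵥ (((X₂ᵀ * X₂)⁻¹ * X₂ᵀ) *ᵥ (y - X₁ *ᵥ φhat)) := by
  set s : (κ₁ → ℝ) → κ₂ → ℝ := fun φ => ((X₂ᵀ * X₂)⁻¹ * X₂ᵀ) *ᵥ (y - X₁ *ᵥ φ)
  refine isMinOn_univ_iff_of_eq_add (fun φ t => X₁ *ᵥ φ + X₂ *ᵥ t) s hspan
    (Q := fun φ t => 1 / 2 * (X₂ *ᵥ (s φ - t)) ⬝ᵥ (X₂ *ᵥ (s φ - t))) (fun φ t => ?_)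
    (fun φ t => ?_) (fun φ => ?_) (fun φ t hQ => ?_) μhat
  · simp only [hpen, sub_add_eq_sub_sub, sub_mulVec_dotProduct_self X₂ hX₂, s]
    ring
  · exact mul_nonneg (by norm_num) (Finset.sum_nonneg fun i _ => mul_self_nonneg _)
  · simp only [sub_self, mulVec_zero, dotProduct_zero, mul_zero]
  · have hzero : X₂ *ᵥ (s φ - t) = 0 := by
      rw [← dotProduct_self_eq_zero]
      simpa using hQ
    rw [mulVec_sub, sub_eq_zero] at hzero
    simp only [hzero]

section BlockInverse

variable {ι κ₁ κ₂ R : Type*} [Fintype ι] [Fintype κ₁] [Fintype κ₂] [DecidableEq ι] [CommRing R]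
  {B : Matrix ι ι R} {e : κ₁ ⊕ κ₂ ≃ ι} {X₁ : Matrix ι κ₁ R} {X₂ : Matrix ι κ₂ R}

theorem Matrix.mulVec_add_mulVec_of_fromCols_eq_submatrix_inv (hB : IsUnit B)
    (hX : fromCols X₁ X₂ = B⁻¹.submatrix id e) (φ : κ₁ → R) (t : κ₂ → R) :
    B *ᵥ (X₁ *ᵥ φ + X₂ *ᵥ t) = Sum.elim φ t ∘ e.symm := by
  rw [← fromCols_mulVec_sumElim, hX, submatrix_mulVec_equiv, Function.comp_id, mulVec_mulVec,
    mul_nonsing_inv _ ((isUnit_iff_isUnit_det B).mp hB), one_mulVec]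

theorem Matrix.exists_mulVec_add_mulVec_eq_of_fromCols_eq_submatrix_inv (hB : IsUnit B)
    (hX : fromCols X₁ X₂ = B⁻¹.submatrix id e) (μ : ι → R) :
    ∃ φ t, X₁ *ᵥ φ + X₂ *ᵥ t = μ := by
  refine ⟨(B *ᵥ μ) ∘ e ∘ Sum.inl, (B *ᵥ μ) ∘ e ∘ Sum.inr, ?_⟩
  rw [← fromCols_mulVec_sumElim, hX, submatrix_mulVec_equiv, Function.comp_id,
    ← Function.comp_assoc, ← Function.comp_assoc, Sum.elim_comp_inl_inr, Function.comp_assoc,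
    e.self_comp_symm, Function.comp_id, mulVec_mulVec,
    nonsing_inv_mul _ ((isUnit_iff_isUnit_det B).mp hB), one_mulVec]

theorem Matrix.mulVec_injective_of_fromCols_eq_submatrix_inv (hB : IsUnit B)
    (hX : fromCols X₁ X₂ = B⁻¹.submatrix id e) : Function.Injective X₂.mulVec := by
  intro t t' h
  funext k
  have h' := congrArg (fun v => (B *ᵥ (X₁ *ᵥ 0 + v)) (e (Sum.inr k))) h
  simpa only [mulVec_add_mulVec_of_fromCols_eq_submatrix_inv hB hX, Function.comp_apply,
    e.symm_apply_apply, Sum.elim_inr] using h'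

end BlockInverse

theorem mulVec_castLE_of_row_eq_diff {n : ℕ} {D : Matrix (Fin n) (Fin n) ℝ}
    (hD : ∀ i j : Fin n, (i : ℕ) < n - 1 →
      D i j = if (j : ℕ) = (i : ℕ) then -1 else if (j : ℕ) = (i : ℕ) + 1 then 1 else 0)
    (μ : Fin n → ℝ) (j : Fin (n - 1)) :
    (D *ᵥ μ) (Fin.castLE (Nat.sub_le n 1) j)
      = μ ⟨(j : ℕ) + 1, by have := j.isLt; omega⟩ - μ (Fin.castLE (Nat.sub_le n 1) j) := by
  have hrow : D (Fin.castLE (Nat.sub_le n 1) j)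
      = Pi.single ⟨(j : ℕ) + 1, by have := j.isLt; omega⟩ 1
        - Pi.single (Fin.castLE (Nat.sub_le n 1) j) 1 := by
    funext k
    rw [hD _ _ j.isLt]
    simp only [Pi.sub_apply, Pi.single_apply, Fin.ext_iff, Fin.val_castLE]
    split_ifs <;> first | omega | norm_num
  rw [mulVec, hrow, sub_dotProduct, single_dotProduct, single_dotProduct, one_mul, one_mul]

/-- Reduction of the 1D fused lasso to an ordinary lasso: `μ̂` minimizes
`½‖y-μ‖² + λ‖Dμ‖₁` iff `μ̂ = X₁ φ̂ + X₂ φ̂₂`, where `φ̂` minimizes the lasso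
objective `½‖ỹ - X̃φ‖² + λ‖φ‖₁` and `φ̂₂ = (X₂ᵀX₂)⁻¹X₂ᵀ(y - X₁ φ̂)`. -/
theorem fused_lasso_reduction (n : ℕ) (hn : 2 ≤ n)
    (Dtilde : Matrix (Fin n) (Fin n) ℝ)
    (hD : ∀ i j : Fin n, (i : ℕ) < n - 1 →
      Dtilde i j = if (j : ℕ) = (i : ℕ) then -1
        else if (j : ℕ) = (i : ℕ) + 1 then 1 else 0)
    (hinv : IsUnit Dtilde)
    (X₁ : Matrix (Fin n) (Fin (n - 1)) ℝ)
    (hX₁ : ∀ i k, X₁ i k = Dtilde⁻¹ i (Fin.castLE (Nat.sub_le n 1) k))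
    (X₂ : Matrix (Fin n) (Fin 1) ℝ)
    (hX₂ : ∀ i, X₂ i 0 = Dtilde⁻¹ i ⟨n - 1, by omega⟩)
    (P₂ : Matrix (Fin n) (Fin n) ℝ) (hP₂ : P₂ = X₂ * (X₂ᵀ * X₂)⁻¹ * X₂ᵀ)
    (y : Fin n → ℝ) (lam : ℝ)
    (ytil : Fin n → ℝ) (hytil : ytil = (1 - P₂).mulVec y)
    (Xtil : Matrix (Fin n) (Fin (n - 1)) ℝ) (hXtil : Xtil = (1 - P₂) * X₁)
    (f : (Fin n → ℝ) → ℝ)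
    (hf : f = fun μ => (1 / 2) * ∑ i, (y i - μ i) ^ 2
      + lam * ∑ j : Fin (n - 1),
          |μ ⟨(j : ℕ) + 1, by have := j.isLt; omega⟩
            - μ (Fin.castLE (Nat.sub_le n 1) j)|)
    (g : (Fin (n - 1) → ℝ) → ℝ)
    (hg : g = fun φ => (1 / 2) * ∑ i, (ytil i - Xtil.mulVec φ i) ^ 2
      + lam * ∑ j, |φ j|) :
    ∀ μhat : Fin n → ℝ,
      IsMinOn f Set.univ μhat ↔
      ∃ φhat : Fin (n - 1) → ℝ, IsMinOn g Set.univ φhat ∧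
        μhat = X₁.mulVec φhat
          + X₂.mulVec (((X₂ᵀ * X₂)⁻¹ * X₂ᵀ).mulVec (y - X₁.mulVec φhat)) := by
  intro μhat
  let e : Fin (n - 1) ⊕ Fin 1 ≃ Fin n := finSumFinEquiv.trans (finCongr (by omega))
  have he₁ : ∀ j, e (Sum.inl j) = Fin.castLE (Nat.sub_le n 1) j := fun _ => rfl
  have he₂ : e (Sum.inr 0) = ⟨n - 1, by omega⟩ := rfl
  have hX : fromCols X₁ X₂ = Dtilde⁻¹.submatrix id e := by
    ext i (k | k)
    · simp [hX₁, he₁]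
    · rw [Subsingleton.elim k 0]
      simp [hX₂, he₂]
  have hpen : ∀ φ t, lam * ∑ j, |(Dtilde *ᵥ (X₁ *ᵥ φ + X₂ *ᵥ t)) (Fin.castLE (Nat.sub_le n 1) j)|
      = lam * ∑ j, |φ j| := by
    intro φ t
    simp only [mulVec_add_mulVec_of_fromCols_eq_submatrix_inv hinv hX, ← he₁, Function.comp_apply,
      e.symm_apply_apply, Sum.elim_inl]
  have hf' : f = fun μ => 1 / 2 * (y - μ) ⬝ᵥ (y - μ)
      + lam * ∑ j, |(Dtilde *ᵥ μ) (Fin.castLE (Nat.sub_le n 1) j)| := by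
    simp only [hf, mulVec_castLE_of_row_eq_diff hD, dotProduct, sq, Pi.sub_apply]
  have hg' : g = fun φ => 1 / 2 * ((1 - P₂) *ᵥ (y - X₁ *ᵥ φ)) ⬝ᵥ ((1 - P₂) *ᵥ (y - X₁ *ᵥ φ))
      + lam * ∑ j, |φ j| := by
    simp only [hg, hytil, hXtil, mulVec_sub, ← mulVec_mulVec, dotProduct, sq, Pi.sub_apply]
  rw [hf', hg', hP₂]
  exact isMinOn_half_sq_add_penalty_iff X₁ X₂
    (isUnit_det_transpose_mul_self (mulVec_injective_of_fromCols_eq_submatrix_inv hinv hX))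
    (exists_mulVec_add_mulVec_eq_of_fromCols_eq_submatrix_inv hinv hX) _ _ hpen y μhat
end
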